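/- arXiv:1907.07881 — 5 statements merged into one kernel-verified Lean document; each statement's English description precedes it below -/
import Mathlib

section
/- Let T_{q,n} be the Temperley–Lieb algebra over ℂ with generators t_1,…,t_{n−1} and relations t_i t_j = t_j t_i for |i−j| ≥ 2, t_i² = (q+q^{-1}) t_i, and t_i t_j t_i = t_i for |i−j| = 1. Set b_i = t_i − 1/(q+q^{-1}). Then the elements b_i satisfy: (i) b_i b_j = b_j b_i for |i−j| ≥ 2; (ii) b_i² b_j − (p² + p^{-2}) b_i b_j b_i + b_j b_i² = b_j for |i−j| = 1, where p² = −q^{-2}. Hence the assignment 𝔟_i ↦ b_i defines an algebra homomorphism from the Onsager algebra O_p(A_{n−1}) to T_{q,n}. -/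
lemma onsager_aux {A : Type*} [Ring A] [Algebra ℂ A] (a lam : ℂ) (ha : a ≠ 0)
    (hlam : lam = 2 - a^2) (u v : A)
    (hu : u*u = a • u) (huvu : u*v*u = u) :
    (u - a⁻¹ • 1)^2 * (v - a⁻¹ • 1)
      - lam • ((u - a⁻¹ • 1) * (v - a⁻¹ • 1) * (u - a⁻¹ • 1))
      + (v - a⁻¹ • 1) * (u - a⁻¹ • 1)^2 = v - a⁻¹ • 1 := by
  simp only [sq, mul_sub, sub_mul, smul_mul_assoc, mul_smul_comm, smul_smul, mul_one, one_mul,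
    smul_sub]
  rw [hu, huvu]
  simp only [smul_mul_assoc, mul_smul_comm, smul_smul]
  subst hlam
  match_scalars <;> field_simp <;> ring

/-- In the Temperley–Lieb algebra `T_{q,n}` (generators `t_1, …, t_{n-1}` with
`t_i t_j = t_j t_i` for `|i-j| ≥ 2`, `t_i² = (q+q⁻¹) t_i`, `t_i t_j t_i = t_i` for
`|i-j| = 1`), the elements `b_i = t_i - 1/(q+q⁻¹)` satisfy the Onsager algebra
`O_p(A_{n-1})` relations, where `p² = -q⁻²`; hence `𝔟_i ↦ b_i` defines an algebra
homomorphism `O_p(A_{n-1}) → T_{q,n}`. -/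
theorem stmt1 {A : Type*} [Ring A] [Algebra ℂ A] (n : ℕ)
    (q p : ℂ) (hq0 : q ≠ 0) (hqq : q + q⁻¹ ≠ 0) (hp0 : p ≠ 0)
    (hp : p ^ 2 = -(q ^ 2)⁻¹)
    (t : ℕ → A)
    (hcomm : ∀ i j, 1 ≤ i → i ≤ n - 1 → 1 ≤ j → j ≤ n - 1 → (i + 2 ≤ j ∨ j + 2 ≤ i) →
      t i * t j = t j * t i)
    (hsq : ∀ i, 1 ≤ i → i ≤ n - 1 → t i ^ 2 = (q + q⁻¹) • t i)
    (htl : ∀ i j, 1 ≤ i → i ≤ n - 1 → 1 ≤ j → j ≤ n - 1 → (i = j + 1 ∨ j = i + 1) →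
      t i * t j * t i = t i) :
    (∀ i j, 1 ≤ i → i ≤ n - 1 → 1 ≤ j → j ≤ n - 1 → (i + 2 ≤ j ∨ j + 2 ≤ i) →
      (t i - (q + q⁻¹)⁻¹ • 1) * (t j - (q + q⁻¹)⁻¹ • 1) =
        (t j - (q + q⁻¹)⁻¹ • 1) * (t i - (q + q⁻¹)⁻¹ • 1)) ∧
    (∀ i j, 1 ≤ i → i ≤ n - 1 → 1 ≤ j → j ≤ n - 1 → (i = j + 1 ∨ j = i + 1) →
      (t i - (q + q⁻¹)⁻¹ • 1) ^ 2 * (t j - (q + q⁻¹)⁻¹ • 1)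
        - (p ^ 2 + (p ^ 2)⁻¹) •
            ((t i - (q + q⁻¹)⁻¹ • 1) * (t j - (q + q⁻¹)⁻¹ • 1) * (t i - (q + q⁻¹)⁻¹ • 1))
        + (t j - (q + q⁻¹)⁻¹ • 1) * (t i - (q + q⁻¹)⁻¹ • 1) ^ 2
      = t j - (q + q⁻¹)⁻¹ • 1) := by
  constructor
  · intro i j hi1 hi2 hj1 hj2 hij
    have h := hcomm i j hi1 hi2 hj1 hj2 hij
    simp only [sub_mul, mul_sub, smul_mul_assoc, mul_smul_comm, mul_one, one_mul, smul_sub,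
      smul_smul, h]
    abel
  · intro i j hi1 hi2 hj1 hj2 hij
    have hlam : p ^ 2 + (p ^ 2)⁻¹ = 2 - (q + q⁻¹) ^ 2 := by
      rw [hp]; field_simp; ring
    have hu : t i * t i = (q + q⁻¹) • t i := by rw [← sq]; exact hsq i hi1 hi2
    have huvu : t i * t j * t i = t i := htl i j hi1 hi2 hj1 hj2 hij
    exact onsager_aux (q + q⁻¹) (p ^ 2 + (p ^ 2)⁻¹) hqq hlam (t i) (t j) hu huvu
end

section
/- More generally, for arbitrary scalars c_i, d_i, the elements g'_i = f_i + c_i k_i^{-1} e_i + d_i k_i^{-1} in U_p satisfy Δ(g'_i) = (f_i + c_i k_i^{-1} e_i) ⊗ 1 + k_i^{-1} ⊗ g'_i. Hence the subalgebra B generated by the g'_i satisfies Δ(B) ⊆ U_p ⊗ B. -/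
open scoped TensorProduct

set_option synthInstance.maxHeartbeats 1000000 in
set_option maxHeartbeats 1000000 in
/-- For arbitrary scalars `c_i, d_i`, the elements `g'_i = f_i + c_i k_i⁻¹ e_i + d_i k_i⁻¹`
satisfy `Δ(g'_i) = (f_i + c_i k_i⁻¹ e_i) ⊗ 1 + k_i⁻¹ ⊗ g'_i`; hence the subalgebra `B`
generated by the `g'_i` satisfies `Δ(B) ⊆ U_p ⊗ B`. -/
theorem stmt4 {U : Type*} [Ring U] [Algebra ℂ U] {I : Type*}
    (Δ : U →ₐ[ℂ] U ⊗[ℂ] U)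
    (e f k kinv : I → U) (c d : I → ℂ)
    (hk : ∀ i, kinv i * k i = 1)
    (hΔe : ∀ i, Δ (e i) = 1 ⊗ₜ[ℂ] e i + e i ⊗ₜ[ℂ] k i)
    (hΔf : ∀ i, Δ (f i) = f i ⊗ₜ[ℂ] 1 + kinv i ⊗ₜ[ℂ] f i)
    (hΔk : ∀ i, Δ (kinv i) = kinv i ⊗ₜ[ℂ] kinv i) :
    (∀ i, Δ (f i + c i • (kinv i * e i) + d i • kinv i) =
        (f i + c i • (kinv i * e i)) ⊗ₜ[ℂ] 1 +
          kinv i ⊗ₜ[ℂ] (f i + c i • (kinv i * e i) + d i • kinv i)) ∧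
    (∀ x ∈ Algebra.adjoin ℂ
        (Set.range fun i => f i + c i • (kinv i * e i) + d i • kinv i),
      Δ x ∈ (Algebra.TensorProduct.map (AlgHom.id ℂ U)
        (Algebra.adjoin ℂ
          (Set.range fun i => f i + c i • (kinv i * e i) + d i • kinv i)).val).range) := by
  set B := Algebra.adjoin ℂ
      (Set.range fun i => f i + c i • (kinv i * e i) + d i • kinv i) with hB
  set φ := Algebra.TensorProduct.map (AlgHom.id ℂ U) B.val with hφ
  have key : ∀ i, Δ (f i + c i • (kinv i * e i) + d i • kinv i) =
      (f i + c i • (kinv i * e i)) ⊗ₜ[ℂ] 1 +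
        kinv i ⊗ₜ[ℂ] (f i + c i • (kinv i * e i) + d i • kinv i) := by
    intro i
    have hke : Δ (kinv i * e i) =
        kinv i ⊗ₜ[ℂ] (kinv i * e i) + (kinv i * e i) ⊗ₜ[ℂ] 1 := by
      rw [map_mul, hΔe, hΔk, mul_add, Algebra.TensorProduct.tmul_mul_tmul,
        Algebra.TensorProduct.tmul_mul_tmul, mul_one, hk]
    rw [map_add, map_add, map_smul, map_smul, hΔf, hke, hΔk]
    simp only [TensorProduct.tmul_add, TensorProduct.add_tmul, smul_add,
      TensorProduct.tmul_smul, TensorProduct.smul_tmul']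
    abel
  refine ⟨key, fun x hx => ?_⟩
  induction hx using Algebra.adjoin_induction with
  | mem x hx =>
    obtain ⟨i, rfl⟩ := hx
    rw [key i]
    have hg : (f i + c i • (kinv i * e i) + d i • kinv i) ∈ B :=
      Algebra.subset_adjoin ⟨i, rfl⟩
    exact ⟨(f i + c i • (kinv i * e i)) ⊗ₜ[ℂ] 1 +
      kinv i ⊗ₜ[ℂ] ⟨_, hg⟩, by
      rw [hφ, map_add]
      simp [Algebra.TensorProduct.map_tmul]⟩
  | algebraMap r =>
    exact ⟨algebraMap ℂ _ r, by simp [φ]⟩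
  | add x y hx hy ihx ihy =>
    rw [map_add]; exact add_mem ihx ihy
  | mul x y hx hy ihx ihy =>
    rw [map_mul]; exact mul_mem ihx ihy
end

section
/- Let ⟨η_1| = Σ_{m≥0} ⟨m|/(q;q)_m in the dual Fock space, where ⟨m|m'⟩ = (q²;q²)_m δ_{m,m'} and (x;q)_m = ∏_{j=1}^m (1 − x q^{j−1}). Then the vector |η_1⟩ = Σ_{m≥0} |m⟩/(q;q)_m satisfies (a⁺ − 1 + k)|η_1⟩ = 0, (a⁻ − 1 − q k)|η_1⟩ = 0, and (a⁺ − a⁻ + (1+q)k)|η_1⟩ = 0, where a⁺|m⟩ = |m+1⟩, a⁻|m⟩ = (1−q^{2m})|m−1⟩, k|m⟩ = q^m|m⟩. -/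
noncomputable section

/-- The finite q-Pochhammer symbol `(q;q)_m = ∏_{j=1}^m (1 - q^j)`. -/
def qpoch (q : ℂ) (m : ℕ) : ℂ := ∏ j ∈ Finset.range m, (1 - q ^ (j + 1))

/-- `a⁺` on the completed Fock space (coefficient-wise): `(a⁺ v)_m = v_{m-1}`, `(a⁺ v)_0 = 0`. -/
def aP (v : ℕ → ℂ) : ℕ → ℂ := fun m => match m with
  | 0 => 0
  | Nat.succ l => v l

/-- `a⁻`: `(a⁻ v)_m = (1 - q^{2(m+1)}) v_{m+1}`. -/
def aM (q : ℂ) (v : ℕ → ℂ) : ℕ → ℂ := fun m => (1 - q ^ (2 * (m + 1))) * v (m + 1)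

/-- `k`: `(k v)_m = q^m v_m`. -/
def kO (q : ℂ) (v : ℕ → ℂ) : ℕ → ℂ := fun m => q ^ m * v m

/-- The boundary vector `|η_1⟩ = Σ_{m ≥ 0} |m⟩/(q;q)_m`. -/
def eta1 (q : ℂ) : ℕ → ℂ := fun m => (qpoch q m)⁻¹

lemma qpoch_succ (q : ℂ) (m : ℕ) : qpoch q (m + 1) = qpoch q m * (1 - q ^ (m + 1)) := by
  simp [qpoch, Finset.prod_range_succ]

lemma qpoch_ne (q : ℂ) (hqroot : ∀ k : ℕ, 0 < k → q ^ k ≠ 1) (m : ℕ) : qpoch q m ≠ 0 := by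
  induction m with
  | zero => simp [qpoch]
  | succ n ih =>
    rw [qpoch_succ]
    refine mul_ne_zero ih (sub_ne_zero.mpr ?_)
    exact fun h => hqroot (n+1) (Nat.succ_pos n) h.symm

lemma eta1_succ (q : ℂ) (hqroot : ∀ k : ℕ, 0 < k → q ^ k ≠ 1) (m : ℕ) :
    (1 - q ^ (m + 1)) * eta1 q (m + 1) = eta1 q m := by
  have h1 : (1 - q ^ (m + 1)) ≠ 0 :=
    sub_ne_zero.mpr fun h => hqroot (m+1) (Nat.succ_pos m) h.symm
  rw [eta1, eta1, qpoch_succ, mul_inv]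
  rw [mul_comm (qpoch q m)⁻¹, ← mul_assoc, mul_inv_cancel₀ h1, one_mul]

/-- `(a⁺ - 1 + k)|η_1⟩ = 0`, `(a⁻ - 1 - qk)|η_1⟩ = 0`, `(a⁺ - a⁻ + (1+q)k)|η_1⟩ = 0`. -/
theorem stmt7 (q : ℂ) (hq0 : q ≠ 0) (hqroot : ∀ k : ℕ, 0 < k → q ^ k ≠ 1) :
    aP (eta1 q) - eta1 q + kO q (eta1 q) = 0 ∧
    aM q (eta1 q) - eta1 q - q • kO q (eta1 q) = 0 ∧
    aP (eta1 q) - aM q (eta1 q) + (1 + q) • kO q (eta1 q) = 0 := by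
  have h1 : aP (eta1 q) - eta1 q + kO q (eta1 q) = 0 := by
    funext m
    cases m with
    | zero => simp [aP, kO, eta1, qpoch]
    | succ l =>
      have := eta1_succ q hqroot l
      simp only [Pi.add_apply, Pi.sub_apply, Pi.zero_apply, aP, kO]
      linear_combination -this
  have h2 : aM q (eta1 q) - eta1 q - q • kO q (eta1 q) = 0 := by
    funext m
    have := eta1_succ q hqroot m
    simp only [Pi.sub_apply, Pi.smul_apply, Pi.zero_apply, smul_eq_mul, aM, kO]
    have hexp : (2 * (m + 1)) = (m+1) + (m+1) := by ring
    rw [hexp, pow_add]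
    linear_combination (1 + q ^ (m+1)) * this
  refine ⟨h1, h2, ?_⟩
  have := sub_eq_zero.mpr (h1.trans h2.symm)
  funext m
  have hm := congrFun this m
  simp only [Pi.sub_apply, Pi.add_apply, Pi.smul_apply, Pi.zero_apply, smul_eq_mul] at hm ⊢
  linear_combination hm
end
end

section
/- The vector |η_2⟩ = Σ_{m≥0} |2m⟩/(q⁴;q⁴)_m in the (completed) q-boson Fock space satisfies (a⁺ − a⁻)|η_2⟩ = 0. Moreover, up to scalar multiple, |η_2⟩ is the unique formal vector Σ_m c_m|m⟩ annihilated by a⁺ − a⁻. -/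
/-!
Coefficientwise, `(a⁺ - a⁻) c = 0` says `(1 - q²) c₁ = 0` and `c_m = (1 - q^{2(m+2)}) c_{m+2}`
for all `m`. Since `q` is not a root of unity these factors never vanish, so a kernel vector is
determined by `c₀` through this two-step recurrence: its odd coefficients vanish and
`c_{2k} = c₀ / (q⁴;q⁴)_k`, which are exactly the coefficients of `c₀ • |η_2⟩`.
-/

noncomputable section

/-- The boundary vector `|η_2⟩ = Σ_{m ≥ 0} |2m⟩/(q⁴;q⁴)_m`. -/
def eta2 (q : ℂ) : ℕ → ℂ := fun m =>
  if m % 2 = 0 then (∏ j ∈ Finset.range (m / 2), (1 - (q ^ 4) ^ (j + 1)))⁻¹ else 0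

lemma one_sub_pow_ne_zero {R : Type*} [Ring R] {q : R} (hq : ∀ k : ℕ, 0 < k → q ^ k ≠ 1)
    {n : ℕ} (hn : 0 < n) : 1 - q ^ n ≠ 0 :=
  sub_ne_zero.mpr (hq n hn).symm

lemma aP_sub_aM_eq_zero_iff (q : ℂ) (c : ℕ → ℂ) :
    aP c - aM q c = 0 ↔
      (1 - q ^ 2) * c 1 = 0 ∧ ∀ m, c m = (1 - q ^ (2 * (m + 2))) * c (m + 2) := by
  constructor
  · intro h
    refine ⟨?_, fun m => ?_⟩
    · simpa [aP, aM, eq_comm] using congrFun h 0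
    · simpa [aP, aM, sub_eq_zero] using congrFun h (m + 1)
  · rintro ⟨h1, hrec⟩
    funext m
    cases m with
    | zero => simp [aP, aM, h1]
    | succ m => simp [aP, aM, ← hrec]

lemma aP_sub_aM_sub_smul (q s : ℂ) (c d : ℕ → ℂ) :
    aP (c - s • d) - aM q (c - s • d) = aP c - aM q c - s • (aP d - aM q d) := by
  funext m
  cases m <;> simp [aP, aM] <;> ring

lemma eq_zero_of_aP_sub_aM_eq_zero {q : ℂ} (hq : ∀ k : ℕ, 0 < k → q ^ k ≠ 1) {c : ℕ → ℂ}
    (hc : aP c - aM q c = 0) (h0 : c 0 = 0) : c = 0 := by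
  obtain ⟨h1, hrec⟩ := (aP_sub_aM_eq_zero_iff q c).mp hc
  funext m
  induction m using Nat.twoStepInduction with
  | zero => exact h0
  | one => exact (mul_eq_zero.mp h1).resolve_left (one_sub_pow_ne_zero hq two_pos)
  | more m ih _ =>
    have h := hrec m
    rw [ih, eq_comm] at h
    exact (mul_eq_zero.mp h).resolve_left (one_sub_pow_ne_zero hq (by positivity))

lemma eta2_even (q : ℂ) (k : ℕ) :
    eta2 q (2 * k) = (∏ j ∈ Finset.range k, (1 - (q ^ 4) ^ (j + 1)))⁻¹ := by
  simp [eta2]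

lemma eta2_odd (q : ℂ) (k : ℕ) : eta2 q (2 * k + 1) = 0 := by
  simp [eta2]

lemma eta2_eq_mul_eta2_add_two {q : ℂ} (hq : ∀ k : ℕ, 0 < k → q ^ k ≠ 1) (m : ℕ) :
    eta2 q m = (1 - q ^ (2 * (m + 2))) * eta2 q (m + 2) := by
  obtain ⟨k, rfl | rfl⟩ : ∃ k, m = 2 * k ∨ m = 2 * k + 1 := ⟨m / 2, by omega⟩
  · have hpow : q ^ (2 * (2 * (k + 1))) = (q ^ 4) ^ (k + 1) := by
      rw [← pow_mul]; ring_nf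
    have hf : 1 - (q ^ 4) ^ (k + 1) ≠ 0 := hpow ▸ one_sub_pow_ne_zero hq (by positivity)
    rw [show 2 * k + 2 = 2 * (k + 1) by ring, eta2_even, eta2_even, Finset.prod_range_succ,
      hpow, mul_inv, mul_left_comm, mul_inv_cancel₀ hf, mul_one]
  · rw [show 2 * k + 1 + 2 = 2 * (k + 1) + 1 by ring, eta2_odd, eta2_odd, mul_zero]

lemma aP_sub_aM_eta2 {q : ℂ} (hq : ∀ k : ℕ, 0 < k → q ^ k ≠ 1) :
    aP (eta2 q) - aM q (eta2 q) = 0 :=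
  (aP_sub_aM_eq_zero_iff q _).mpr
    ⟨by simp [eta2], eta2_eq_mul_eta2_add_two hq⟩

theorem stmt8_general (q : ℂ) (hqroot : ∀ k : ℕ, 0 < k → q ^ k ≠ 1) :
    aP (eta2 q) - aM q (eta2 q) = 0 ∧
    ∀ c : ℕ → ℂ, aP c - aM q c = 0 → ∃ s : ℂ, c = s • eta2 q := by
  refine ⟨aP_sub_aM_eta2 hqroot, fun c hc => ⟨c 0, sub_eq_zero.mp ?_⟩⟩
  apply eq_zero_of_aP_sub_aM_eq_zero hqroot
  · rw [aP_sub_aM_sub_smul, hc, aP_sub_aM_eta2 hqroot, smul_zero, sub_zero]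
  · simp [eta2]

/-- `(a⁺ - a⁻)|η_2⟩ = 0`, and every formal vector annihilated by `a⁺ - a⁻` is a scalar
multiple of `|η_2⟩`. -/
theorem stmt8 (q : ℂ) (hq0 : q ≠ 0) (hqroot : ∀ k : ℕ, 0 < k → q ^ k ≠ 1) :
    aP (eta2 q) - aM q (eta2 q) = 0 ∧
    ∀ c : ℕ → ℂ, aP c - aM q c = 0 → ∃ s : ℂ, c = s • eta2 q :=
  stmt8_general q hqroot
end
end

section
/- Let n ≥ 3, t a nonzero complex number, μ ∈ {±1}, z a nonzero complex number, and define on (ℂ²)^{⊗n}: b_0 = zσ⁺_1 + z^{-1}σ⁻_1 − μ((t−t^{-1})/2)σ^z_1 − μ(t−t^{-1})(t²−t^{-2})/(2(t²+t^{-2})), b_i = σ⁺_iσ⁻_{i+1} + σ⁻_iσ⁺_{i+1} − ((t²+t^{-2})/4)σ^z_iσ^z_{i+1} − ((t²−t^{-2})/4)(σ^z_i−σ^z_{i+1}) + (t²−t^{-2})²/(4(t²+t^{-2})) for 0 < i < n, and b_n = σ^x_n + μ((t−t^{-1})/2)σ^z_n − μ(t−t^{-1})(t²−t^{-2})/(2(t²+t^{-2})).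 Let H(z) = −(μ(t+t^{-1})/2)b_0 + b_1 + ⋯ + b_{n−1} − (μ(t+t^{-1})/2)b_n and let σ^x = σ^x_1⋯σ^x_n be the global spin reversal. Then σ^x H(z) σ^x = H(z^{-1}). -/
noncomputable section

/-- `σ^z` at site `i` of `(ℂ²)^{⊗n}`. -/
def pZ (n : ℕ) (i : Fin n) : Matrix (Fin n → Fin 2) (Fin n → Fin 2) ℂ :=
  Matrix.diagonal fun α => if α i = 1 then 1 else -1

/-- `σ⁺` at site `i`. -/
def pP (n : ℕ) (i : Fin n) : Matrix (Fin n → Fin 2) (Fin n → Fin 2) ℂ :=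
  Matrix.of fun β α => if α i = 0 ∧ β = Function.update α i 1 then 1 else 0

/-- `σ⁻` at site `i`. -/
def pM (n : ℕ) (i : Fin n) : Matrix (Fin n → Fin 2) (Fin n → Fin 2) ℂ :=
  Matrix.of fun β α => if α i = 1 ∧ β = Function.update α i 0 then 1 else 0

/-- `σ^x` at site `i`. -/
def pX (n : ℕ) (i : Fin n) : Matrix (Fin n → Fin 2) (Fin n → Fin 2) ℂ :=
  Matrix.of fun β α => if β = Function.update α i (1 - α i) then 1 else 0

/-- The global spin reversal `σ^x = σ^x_1 ⋯ σ^x_n`. -/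
def gX (n : ℕ) : Matrix (Fin n → Fin 2) (Fin n → Fin 2) ℂ :=
  Matrix.of fun β α => if β = (fun i => 1 - α i) then 1 else 0

namespace Stmt15Aux

lemma two_sub : ∀ x : Fin 2, 1 - (1 - x) = x := by decide

lemma flip_flip {n : ℕ} (α : Fin n → Fin 2) : (fun i => 1 - (1 - α i)) = α := by
  funext i; exact two_sub (α i)

lemma mul_gX_apply {n : ℕ} (B : Matrix (Fin n → Fin 2) (Fin n → Fin 2) ℂ)
    (β α : Fin n → Fin 2) : (B * gX n) β α = B β (fun i => 1 - α i) := by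
  rw [Matrix.mul_apply]
  simp only [gX, Matrix.of_apply, mul_ite, mul_one, mul_zero]
  rw [Finset.sum_ite_eq' Finset.univ (fun i => 1 - α i) (B β)]
  simp

lemma gX_mul_apply {n : ℕ} (A : Matrix (Fin n → Fin 2) (Fin n → Fin 2) ℂ)
    (β γ : Fin n → Fin 2) : (gX n * A) β γ = A (fun i => 1 - β i) γ := by
  rw [Matrix.mul_apply]
  simp only [gX, Matrix.of_apply, ite_mul, one_mul, zero_mul]
  have h : ∀ δ : Fin n → Fin 2, (β = fun i => 1 - δ i) ↔ δ = fun i => 1 - β i := by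
    intro δ
    constructor
    · rintro rfl; exact (flip_flip δ).symm
    · rintro rfl; exact (flip_flip β).symm
  simp only [h]
  rw [Finset.sum_ite_eq' Finset.univ (fun i => 1 - β i) (fun δ => A δ γ)]
  simp

lemma conj_apply {n : ℕ} (A : Matrix (Fin n → Fin 2) (Fin n → Fin 2) ℂ)
    (β α : Fin n → Fin 2) :
    (gX n * A * gX n) β α = A (fun i => 1 - β i) (fun i => 1 - α i) := by
  rw [mul_gX_apply, gX_mul_apply]

lemma gX_mul_gX {n : ℕ} : gX n * gX n = 1 := by
  ext β α
  rw [gX_mul_apply]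
  simp only [gX, Matrix.of_apply, flip_flip, Matrix.one_apply]
  have h : ((fun i => 1 - β i) = fun i => 1 - α i) ↔ β = α := by
    constructor
    · intro hh
      funext i
      have := congrFun hh i
      have h2 := two_sub (β i); have h3 := two_sub (α i)
      rw [← h2, ← h3, this]
    · rintro rfl; rfl
  simp [h, eq_comm]

end Stmt15Aux

namespace Stmt15Aux

lemma flip_eq_iff {n : ℕ} (β γ : Fin n → Fin 2) :
    ((fun j => 1 - β j) = γ) ↔ β = (fun j => 1 - γ j) := by
  constructor
  · rintro rfl; exact (flip_flip β).symm
  · rintro rfl; exact flip_flip γ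

lemma flip_inj {n : ℕ} (β α : Fin n → Fin 2) :
    ((fun j => 1 - β j) = fun j => 1 - α j) ↔ β = α := by
  rw [flip_eq_iff, flip_flip]

lemma flip_update {n : ℕ} (α : Fin n → Fin 2) (i : Fin n) (v : Fin 2) :
    (fun j => 1 - Function.update α i v j) = Function.update (fun j => 1 - α j) i (1 - v) := by
  funext j
  by_cases h : j = i
  · subst h; simp
  · simp [Function.update_of_ne h]

lemma sub_eq_one : ∀ x : Fin 2, (1 - x = 1) ↔ x = 0 := by decide
lemma sub_eq_zero : ∀ x : Fin 2, (1 - x = 0) ↔ x = 1 := by decide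

lemma cgZ {n : ℕ} (i : Fin n) : gX n * pZ n i * gX n = - pZ n i := by
  ext β α
  rw [conj_apply]
  simp only [pZ, Matrix.diagonal_apply, Matrix.neg_apply, flip_inj]
  by_cases h : β = α
  · subst h
    simp only [if_pos rfl, sub_eq_one]
    have h4 : ∀ x : Fin 2, (if x = 0 then (1:ℂ) else -1) = -(if x = 1 then 1 else -1) := by
      intro x; fin_cases x <;> norm_num
    exact h4 (β i)
  · simp [h]

lemma cgP {n : ℕ} (i : Fin n) : gX n * pP n i * gX n = pM n i := by
  ext β α
  rw [conj_apply]
  simp only [pP, pM, Matrix.of_apply]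
  have key : ((fun j => 1 - β j) = Function.update (fun j => 1 - α j) i 1) ↔
      β = Function.update α i 0 := by
    rw [flip_eq_iff]
    rw [show (fun j => 1 - Function.update (fun j => 1 - α j) i 1 j) =
        Function.update α i 0 from ?_]
    rw [flip_update, flip_flip]
    norm_num
  simp only [sub_eq_zero, key]

lemma cgM {n : ℕ} (i : Fin n) : gX n * pM n i * gX n = pP n i := by
  ext β α
  rw [conj_apply]
  simp only [pP, pM, Matrix.of_apply]
  have key : ((fun j => 1 - β j) = Function.update (fun j => 1 - α j) i 0) ↔
      β = Function.update α i 1 := by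
    rw [flip_eq_iff]
    rw [show (fun j => 1 - Function.update (fun j => 1 - α j) i 0 j) =
        Function.update α i 1 from ?_]
    rw [flip_update, flip_flip]
    norm_num
  simp only [sub_eq_one, key]

lemma cgX {n : ℕ} (i : Fin n) : gX n * pX n i * gX n = pX n i := by
  ext β α
  rw [conj_apply]
  simp only [pX, Matrix.of_apply]
  have key : ((fun j => 1 - β j) = Function.update (fun j => 1 - α j) i (1 - (1 - α i))) ↔
      β = Function.update α i (1 - α i) := by
    rw [flip_eq_iff]
    rw [show (fun j => 1 - Function.update (fun j => 1 - α j) i (1 - (1 - α i)) j) =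
        Function.update α i (1 - α i) from ?_]
    rw [flip_update, flip_flip, two_sub]
  simp only [key]

lemma cg_mul {n : ℕ} (A B : Matrix (Fin n → Fin 2) (Fin n → Fin 2) ℂ) :
    gX n * (A * B) * gX n = (gX n * A * gX n) * (gX n * B * gX n) := by
  have h := gX_mul_gX (n := n)
  have h2 : (gX n * A * gX n) * (gX n * B * gX n) =
      gX n * (A * ((gX n * gX n) * B)) * gX n := by
    simp only [Matrix.mul_assoc]
  rw [h2, h, one_mul]

lemma cg_one {n : ℕ} : gX n * (1 : Matrix (Fin n → Fin 2) (Fin n → Fin 2) ℂ) * gX n = 1 := by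
  rw [mul_one, gX_mul_gX]

end Stmt15Aux

/-- For the `D^{(2)}_{n+1}`-type Hamiltonian
`H(z) = -(μ(t+t⁻¹)/2) b_0 + b_1 + ⋯ + b_{n-1} - (μ(t+t⁻¹)/2) b_n`
one has `σ^x H(z) σ^x = H(z⁻¹)`. Sites are 0-indexed: site `i` of the paper is
index `i - 1` here. -/
theorem stmt15 (n : ℕ) (hn : 3 ≤ n) (t μ z : ℂ)
    (ht : t ≠ 0) (htt : t ^ 2 + t⁻¹ ^ 2 ≠ 0) (hμ : μ = 1 ∨ μ = -1) (hz : z ≠ 0)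
    (b0 : ℂ → Matrix (Fin n → Fin 2) (Fin n → Fin 2) ℂ)
    (bb : ℕ → Matrix (Fin n → Fin 2) (Fin n → Fin 2) ℂ)
    (bn : Matrix (Fin n → Fin 2) (Fin n → Fin 2) ℂ)
    (H : ℂ → Matrix (Fin n → Fin 2) (Fin n → Fin 2) ℂ)
    (hb0 : ∀ w : ℂ, b0 w =
      w • pP n ⟨0, by omega⟩ + w⁻¹ • pM n ⟨0, by omega⟩ -
        (μ * (t - t⁻¹) / 2) • pZ n ⟨0, by omega⟩ -
        (μ * (t - t⁻¹) * (t ^ 2 - t⁻¹ ^ 2) / (2 * (t ^ 2 + t⁻¹ ^ 2))) •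
          (1 : Matrix (Fin n → Fin 2) (Fin n → Fin 2) ℂ))
    (hbb : ∀ (i : ℕ) (h1 : 0 < i) (h2 : i < n), bb i =
      pP n ⟨i - 1, by omega⟩ * pM n ⟨i, h2⟩ + pM n ⟨i - 1, by omega⟩ * pP n ⟨i, h2⟩ -
        ((t ^ 2 + t⁻¹ ^ 2) / 4) • (pZ n ⟨i - 1, by omega⟩ * pZ n ⟨i, h2⟩) -
        ((t ^ 2 - t⁻¹ ^ 2) / 4) • (pZ n ⟨i - 1, by omega⟩ - pZ n ⟨i, h2⟩) +
        ((t ^ 2 - t⁻¹ ^ 2) ^ 2 / (4 * (t ^ 2 + t⁻¹ ^ 2))) •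
          (1 : Matrix (Fin n → Fin 2) (Fin n → Fin 2) ℂ))
    (hbn : bn = pX n ⟨n - 1, by omega⟩ + (μ * (t - t⁻¹) / 2) • pZ n ⟨n - 1, by omega⟩ -
      (μ * (t - t⁻¹) * (t ^ 2 - t⁻¹ ^ 2) / (2 * (t ^ 2 + t⁻¹ ^ 2))) •
        (1 : Matrix (Fin n → Fin 2) (Fin n → Fin 2) ℂ))
    (hH : ∀ w : ℂ, H w = (-(μ * (t + t⁻¹) / 2)) • b0 w +
      (∑ i ∈ Finset.Ico 1 n, bb i) + (-(μ * (t + t⁻¹) / 2)) • bn) :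
    gX n * H z * gX n = H z⁻¹ := by
  have hμ2 : μ * μ = 1 := by rcases hμ with h | h <;> subst h <;> ring
  -- conjugation of b0
  have hc0 : gX n * b0 z * gX n = b0 z⁻¹ + (μ * (t - t⁻¹)) • pZ n ⟨0, by omega⟩ := by
    rw [hb0 z, hb0 z⁻¹, inv_inv]
    simp only [Matrix.sub_mul, Matrix.mul_sub, Matrix.add_mul, Matrix.mul_add,
      Matrix.mul_smul, Matrix.smul_mul, Stmt15Aux.cgP, Stmt15Aux.cgM, Stmt15Aux.cgZ,
      Stmt15Aux.cg_one, mul_one, Stmt15Aux.gX_mul_gX]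
    module
  -- conjugation of bn
  have hcn : gX n * bn * gX n = bn - (μ * (t - t⁻¹)) • pZ n ⟨n - 1, by omega⟩ := by
    rw [hbn]
    simp only [Matrix.sub_mul, Matrix.mul_sub, Matrix.add_mul, Matrix.mul_add,
      Matrix.mul_smul, Matrix.smul_mul, Stmt15Aux.cgX, Stmt15Aux.cgZ,
      Stmt15Aux.cg_one, mul_one, Stmt15Aux.gX_mul_gX]
    module
  -- a total function version of pZ for the telescoping sum
  set f : ℕ → Matrix (Fin n → Fin 2) (Fin n → Fin 2) ℂ :=
    fun j => if h : j < n then pZ n ⟨j, h⟩ else 0 with hf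
  have hfj : ∀ (j : ℕ) (h : j < n), f j = pZ n ⟨j, h⟩ := fun j h => dif_pos h
  have tel : ∑ i ∈ Finset.Ico 1 n, (f (i - 1) - f i) = f 0 - f (n - 1) := by
    rw [Finset.sum_Ico_eq_sum_range]
    have h1 : ∀ j : ℕ, 1 + j - 1 = j := fun j => by omega
    have h2 : ∀ j : ℕ, 1 + j = j + 1 := fun j => by omega
    simp only [h1, h2]
    exact Finset.sum_range_sub' f (n - 1)
  -- conjugation of the middle sum
  have hsum : ∑ i ∈ Finset.Ico 1 n, (gX n * bb i * gX n) =
      (∑ i ∈ Finset.Ico 1 n, bb i) +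
        ((t ^ 2 - t⁻¹ ^ 2) / 2) • (pZ n ⟨0, by omega⟩ - pZ n ⟨n - 1, by omega⟩) := by
    have h1 : ∀ i ∈ Finset.Ico 1 n, gX n * bb i * gX n =
        bb i + ((t ^ 2 - t⁻¹ ^ 2) / 2) • (f (i - 1) - f i) := by
      intro i hi
      obtain ⟨hi1, hi2⟩ := Finset.mem_Ico.mp hi
      rw [hbb i hi1 hi2, hfj (i - 1) (by omega), hfj i hi2]
      simp only [Matrix.sub_mul, Matrix.mul_sub, Matrix.add_mul, Matrix.mul_add,
        Matrix.mul_smul, Matrix.smul_mul, Stmt15Aux.cg_mul, Stmt15Aux.cgP, Stmt15Aux.cgM,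
        Stmt15Aux.cgZ, Stmt15Aux.cg_one, mul_one, Stmt15Aux.gX_mul_gX,
        Matrix.neg_mul, Matrix.mul_neg, neg_neg]
      module
    rw [Finset.sum_congr rfl h1, Finset.sum_add_distrib, ← Finset.smul_sum, tel,
      hfj 0 (by omega), hfj (n - 1) (by omega)]
  -- assemble
  rw [hH z, hH z⁻¹]
  simp only [Matrix.add_mul, Matrix.mul_add, Matrix.mul_smul, Matrix.smul_mul,
    Finset.mul_sum, Finset.sum_mul]
  rw [hc0, hcn, hsum]
  have hZ0 : pZ n ⟨0, by omega⟩ = pZ n ⟨0, by omega⟩ := rfl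
  rcases hμ with h | h <;> subst h <;> module
end
end
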